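/- Let R = ℤ[s1, s2, s3, s12, s13, s23, s123] be the polynomial ring in seven variables and let I be the ideal generated by the single element rel := s12·s13·s23 − (s12² + s13² + s23² + s12·(s1·s2 + s3·s123) + s13·(s1·s3 + s2·s123) + s23·(s2·s3 + s1·s123) + s1·s2·s3·s123 + s1² + s2² + s3² + s123² − 4). Then the images in R/I of the monomials s1^{k1} s2^{k2} s3^{k3} s12^{k12} s13^{k13} s23^{k23} s123^{k123} with k12·k13·k23 = 0 span R/I as a ℤ-module. -/

import Mathlib

open MvPolynomial

/-- Variables: `X 0 = s1`, `X 1 = s2`, `X 2 = s3`, `X 3 = s12`, `X 4 = s13`, `X 5 = s23`,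
`X 6 = s123`. The Bullock–Przytycki relation for the skein algebra of the four-holed
sphere at `q = 1`. -/
noncomputable def bpRel : MvPolynomial (Fin 7) ℤ :=
  X 3 * X 4 * X 5 -
    (X 3 ^ 2 + X 4 ^ 2 + X 5 ^ 2
      + X 3 * (X 0 * X 1 + X 2 * X 6) + X 4 * (X 0 * X 2 + X 1 * X 6)
      + X 5 * (X 1 * X 2 + X 0 * X 6)
      + X 0 * X 1 * X 2 * X 6 + X 0 ^ 2 + X 1 ^ 2 + X 2 ^ 2 + X 6 ^ 2 - 4)

/-!
Grade the polynomial ring by the total degree in `s12, s13, s23`. Modulo the relation,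
`s12 s13 s23` equals a polynomial of degree at most `2` in this grading, so a monomial divisible by
`s12 s13 s23` is congruent to a `ℤ`-combination of monomials of strictly smaller degree; induction
on the degree then reduces every monomial to one omitting `s12`, `s13` or `s23`.
-/

namespace MvPolynomial

variable {R σ : Type*} [CommRing R]

theorem map_mem_of_forall_monomial_mem {N : Type*} [AddCommGroup N] [Module R N]
    (L : MvPolynomial σ R →ₗ[R] N) {M : Submodule R N} {p : MvPolynomial σ R}
    (h : ∀ d ∈ p.support, L (monomial d 1) ∈ M) : L p ∈ M := by
  rw [p.as_sum, map_sum]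
  refine M.sum_mem fun d hd => ?_
  rw [← mul_one (coeff d p), ← smul_eq_mul, ← smul_monomial, map_smul]
  exact M.smul_mem _ (h d hd)

theorem span_mk_monomial_not_le_eq_top (w : σ → ℕ) {I : Ideal (MvPolynomial σ R)}
    {m : σ →₀ ℕ} {r : MvPolynomial σ R} (hrel : monomial m 1 - r ∈ I)
    (hr : ∀ d ∈ r.support, Finsupp.weight w d < Finsupp.weight w m) :
    Submodule.span R {y | ∃ k, ¬ m ≤ k ∧ y = Ideal.Quotient.mk I (monomial k 1)} = ⊤ := by
  set M := Submodule.span R {y | ∃ k, ¬ m ≤ k ∧ y = Ideal.Quotient.mk I (monomial k 1)}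
  have hmonomial : ∀ n k, Finsupp.weight w k = n → Ideal.Quotient.mk I (monomial k 1) ∈ M := by
    intro n
    induction n using Nat.strong_induction_on with
    | _ n ih =>
      intro k hk
      by_cases hmk : m ≤ k
      swap
      · exact Submodule.subset_span ⟨k, hmk, rfl⟩
      obtain ⟨e, rfl⟩ := exists_add_of_le hmk
      have hreduce : Ideal.Quotient.mk I (monomial (m + e) 1) =
          Ideal.Quotient.mk I (r * monomial e 1) := by
        rw [← mul_one (1 : R), ← monomial_mul, map_mul, map_mul,
          Ideal.Quotient.eq.mpr hrel, mul_one]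
      rw [hreduce]
      refine map_mem_of_forall_monomial_mem
        ((Ideal.Quotient.mkₐ R I).toLinearMap ∘ₗ LinearMap.mulRight R (monomial e 1))
        fun d hd => ?_
      have hd_lt := hr d hd
      simp only [LinearMap.comp_apply, LinearMap.mulRight_apply, monomial_mul, mul_one,
        AlgHom.toLinearMap_apply, Ideal.Quotient.mkₐ_eq_mk]
      refine ih _ ?_ _ rfl
      rw [← hk, map_add, map_add]
      omega
  rw [eq_top_iff]
  rintro y -
  obtain ⟨p, rfl⟩ := Ideal.Quotient.mk_surjective y
  exact map_mem_of_forall_monomial_mem (Ideal.Quotient.mkₐ R I).toLinearMap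
    fun d _ => hmonomial _ d rfl

end MvPolynomial

def bpWeight : Fin 7 → ℕ := ![0, 0, 0, 1, 1, 1, 0]

noncomputable def bpLeadingExponent : Fin 7 →₀ ℕ :=
  Finsupp.single 3 1 + Finsupp.single 4 1 + Finsupp.single 5 1

theorem monomial_bpLeadingExponent :
    (monomial bpLeadingExponent 1 : MvPolynomial (Fin 7) ℤ) = X 3 * X 4 * X 5 := by
  simp [bpLeadingExponent, X, monomial_mul]

theorem weight_bpLeadingExponent : Finsupp.weight bpWeight bpLeadingExponent = 3 := by
  simp [bpLeadingExponent, Finsupp.weight_single, bpWeight]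

theorem bpLeadingExponent_le_iff (k : Fin 7 →₀ ℕ) :
    bpLeadingExponent ≤ k ↔ k 3 * k 4 * k 5 ≠ 0 := by
  simp [Finsupp.le_def, Fin.forall_fin_succ, bpLeadingExponent, Nat.one_le_iff_ne_zero, and_assoc]

theorem weight_lt_of_mem_support_sub_bpRel :
    ∀ d ∈ (X 3 * X 4 * X 5 - bpRel).support,
      Finsupp.weight bpWeight d < Finsupp.weight bpWeight bpLeadingExponent := by
  have hX := isWeightedHomogeneous_X ℤ bpWeight
  obtain ⟨q₂, q₁, q₀, hsplit, h₂, h₁, h₀⟩ : ∃ q₂ q₁ q₀ : MvPolynomial (Fin 7) ℤ,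
      X 3 * X 4 * X 5 - bpRel = q₂ + q₁ + q₀ ∧ IsWeightedHomogeneous bpWeight q₂ 2 ∧
        IsWeightedHomogeneous bpWeight q₁ 1 ∧ IsWeightedHomogeneous bpWeight q₀ 0 :=
    ⟨_, _, _, by rw [bpRel, ← map_ofNat C 4]; ring,
      (((hX 3).pow 2).add ((hX 4).pow 2)).add ((hX 5).pow 2),
      (((hX 3).mul (((hX 0).mul (hX 1)).add ((hX 2).mul (hX 6)))).add
        ((hX 4).mul (((hX 0).mul (hX 2)).add ((hX 1).mul (hX 6))))).add
        ((hX 5).mul (((hX 1).mul (hX 2)).add ((hX 0).mul (hX 6)))),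
      (((((((hX 0).mul (hX 1)).mul (hX 2)).mul (hX 6)).add ((hX 0).pow 2)).add
        ((hX 1).pow 2)).add ((hX 2).pow 2)).add ((hX 6).pow 2) |>.sub
        (isWeightedHomogeneous_C _ _)⟩
  intro d hd
  rw [hsplit] at hd
  rw [weight_bpLeadingExponent]
  rcases Finset.mem_union.mp (support_add hd) with hd | hd
  · rcases Finset.mem_union.mp (support_add hd) with hd | hd
    · rw [h₂ (mem_support_iff.mp hd)]; norm_num
    · rw [h₁ (mem_support_iff.mp hd)]; norm_num
  · rw [h₀ (mem_support_iff.mp hd)]; norm_num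

theorem stmt_9 :
    Submodule.span ℤ
      {y : MvPolynomial (Fin 7) ℤ ⧸ Ideal.span {bpRel} |
        ∃ k : Fin 7 → ℕ, k 3 * k 4 * k 5 = 0 ∧
          y = Ideal.Quotient.mk (Ideal.span {bpRel}) (∏ i, X i ^ k i)} = ⊤ := by
  have hrel : monomial bpLeadingExponent 1 - (X 3 * X 4 * X 5 - bpRel) ∈ Ideal.span {bpRel} := by
    rw [monomial_bpLeadingExponent, sub_sub_cancel]
    exact Ideal.mem_span_singleton_self _
  refine eq_top_mono (Submodule.span_mono ?_)
    (span_mk_monomial_not_le_eq_top bpWeight hrel weight_lt_of_mem_support_sub_bpRel)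
  rintro _ ⟨k, hk, rfl⟩
  refine ⟨k, not_not.mp ((bpLeadingExponent_le_iff k).not.mp hk), ?_⟩
  rw [monomial_eq, Finsupp.prod_fintype _ _ fun i => pow_zero _, C_1, one_mul]
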